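/- Let ψ : ℝ → ℝ be measurable with ∫_ℝ ψ(t)² dt = 1, vanishing outside a measurable set S ⊆ ℝ of finite Lebesgue measure L > 0, and with t ↦ ψ(t)² log₂ ψ(t)² integrable. Then equality H_t(ψ) = log₂ L holds if and only if ψ(t)² = 1/L for almost every t ∈ S. -/

import Mathlib

/-! With `f = ψ²`, the function `klFun x = x log x + 1 - x` is nonnegative on `[0, ∞)` and vanishes
only at `x = 1`. Since `∫_S f = 1` and `|S| = L`, integrating `klFun (L f)` over `S` gives
`L (∫ f log f + log L)`, so `H_t(ψ) = log₂ L` exactly when this integral of a nonnegative function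
vanishes, i.e. when `L f = 1` almost everywhere on `S`. -/

open MeasureTheory Real

/-- Time Shannon entropy `H_t(ψ) = −∫ ψ(t)² log₂ ψ(t)² dt`
(convention `0 · log₂ 0 = 0`, which `Real.logb` obeys). -/
noncomputable def timeEntropy (ψ : ℝ → ℝ) : ℝ :=
  -∫ t : ℝ, ψ t ^ 2 * Real.logb 2 (ψ t ^ 2)

open InformationTheory

lemma klFun_mul (c y : ℝ) :
    klFun (c * y) = c * log c * y + c * (y * log y) + 1 - c * y := by
  rcases eq_or_ne c 0 with rfl | hc
  · simp [klFun_zero]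
  rcases eq_or_ne y 0 with rfl | hy
  · simp [klFun_zero]
  rw [klFun_apply, log_mul hc hy]
  ring

section Gibbs

variable {α : Type*} [MeasurableSpace α] {μ : Measure α} [IsFiniteMeasure μ] {f : α → ℝ}

lemma integral_klFun_mul (c : ℝ) (hf : Integrable f μ)
    (hflog : Integrable (fun x ↦ f x * log (f x)) μ) :
    ∫ x, klFun (c * f x) ∂μ =
      c * log c * ∫ x, f x ∂μ + c * ∫ x, f x * log (f x) ∂μ + μ.real Set.univ
        - c * ∫ x, f x ∂μ := by
  simp_rw [klFun_mul]
  rw [integral_sub (by fun_prop) (by fun_prop), integral_add (by fun_prop) (by fun_prop),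
    integral_add (by fun_prop) (by fun_prop)]
  simp [integral_const_mul]

theorem integral_mul_log_eq_neg_log_measureReal_univ_iff [NeZero μ] (hf_nonneg : 0 ≤ᵐ[μ] f)
    (hf_one : ∫ x, f x ∂μ = 1) (hflog : Integrable (fun x ↦ f x * log (f x)) μ) :
    ∫ x, f x * log (f x) ∂μ = -log (μ.real Set.univ) ↔
      ∀ᵐ x ∂μ, f x = (μ.real Set.univ)⁻¹ := by
  set c := μ.real Set.univ
  have hc : 0 < c := by simp [c, measureReal_def, ENNReal.toReal_pos_iff, NeZero.ne μ]
  have hf : Integrable f μ := .of_integral_ne_zero (by simp [hf_one])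
  have hkl : ∫ x, klFun (c * f x) ∂μ = c * (∫ x, f x * log (f x) ∂μ + log c) := by
    rw [integral_klFun_mul c hf hflog, hf_one]; ring
  have hkl_int : Integrable (fun x ↦ klFun (c * f x)) μ := by
    simp_rw [klFun_mul]; fun_prop
  have hkl_nonneg : 0 ≤ᵐ[μ] fun x ↦ klFun (c * f x) := by
    filter_upwards [hf_nonneg] with x hx using klFun_nonneg (mul_nonneg hc.le hx)
  calc ∫ x, f x * log (f x) ∂μ = -log c ↔ ∫ x, klFun (c * f x) ∂μ = 0 := by
        rw [hkl, mul_eq_zero, or_iff_right hc.ne', add_eq_zero_iff_eq_neg]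
    _ ↔ ∀ᵐ x ∂μ, klFun (c * f x) = 0 := integral_eq_zero_iff_of_nonneg_ae hkl_nonneg hkl_int
    _ ↔ ∀ᵐ x ∂μ, f x = c⁻¹ := by
        refine Filter.eventually_congr ?_
        filter_upwards [hf_nonneg] with x hx
        rw [klFun_eq_zero_iff (mul_nonneg hc.le hx), mul_eq_one_iff_inv_eq₀ hc.ne', eq_comm]

end Gibbs

lemma timeEntropy_eq (ψ : ℝ → ℝ) :
    timeEntropy ψ = -(∫ t, ψ t ^ 2 * log (ψ t ^ 2)) / log 2 := by
  simp_rw [timeEntropy, logb, ← mul_div_assoc, integral_div, neg_div]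

theorem timeEntropy_eq_logb_measure_support_iff_general (ψ : ℝ → ℝ)
    (hnorm : ∫ t : ℝ, ψ t ^ 2 = 1)
    (S : Set ℝ) (hS : MeasurableSet S) (L : ℝ) (hL : 0 < L)
    (hSL : volume S = ENNReal.ofReal L)
    (hsupp : ∀ t ∉ S, ψ t = 0)
    (hent : Integrable (fun t : ℝ => ψ t ^ 2 * Real.logb 2 (ψ t ^ 2))) :
    timeEntropy ψ = Real.logb 2 L ↔ (∀ᵐ t : ℝ, t ∈ S → ψ t ^ 2 = 1 / L) := by
  have : IsFiniteMeasure (volume.restrict S) := isFiniteMeasure_restrict.mpr (by simp [hSL])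
  have : NeZero (volume.restrict S) := ⟨by simp [Measure.restrict_eq_zero, hSL, hL]⟩
  have hvol : (volume.restrict S).real Set.univ = L := by simp [measureReal_def, hSL, hL.le]
  have hsetIntegral (g : ℝ → ℝ) (hg : g 0 = 0) : ∫ t in S, g (ψ t ^ 2) = ∫ t, g (ψ t ^ 2) :=
    setIntegral_eq_integral_of_forall_compl_eq_zero fun t ht ↦ by simp [hsupp t ht, hg]
  have hlog : Integrable (fun t ↦ ψ t ^ 2 * log (ψ t ^ 2)) := by
    simpa [logb, mul_div_assoc', div_mul_cancel₀ _ (log_pos one_lt_two).ne'] using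
      hent.mul_const (log 2)
  have hgibbs := integral_mul_log_eq_neg_log_measureReal_univ_iff (μ := volume.restrict S)
    (f := fun t ↦ ψ t ^ 2) (ae_of_all _ fun t ↦ sq_nonneg _)
    ((hsetIntegral id rfl).trans hnorm) hlog.restrict
  rw [hvol, hsetIntegral (fun y ↦ y * log y) (by simp), ae_restrict_iff' hS] at hgibbs
  rw [timeEntropy_eq, logb, div_left_inj' (log_pos one_lt_two).ne', neg_eq_iff_eq_neg, one_div]
  exact hgibbs

/-- Equality in the maximal-entropy bound `H_t(ψ) ≤ log₂ L` holds iff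
`ψ² = 1/L` almost everywhere on the support set `S` (Haar-type wavelets). -/
theorem timeEntropy_eq_logb_measure_support_iff (ψ : ℝ → ℝ) (hmeas : Measurable ψ)
    (hnorm : ∫ t : ℝ, ψ t ^ 2 = 1)
    (S : Set ℝ) (hS : MeasurableSet S) (L : ℝ) (hL : 0 < L)
    (hSL : volume S = ENNReal.ofReal L)
    (hsupp : ∀ t ∉ S, ψ t = 0)
    (hent : Integrable (fun t : ℝ => ψ t ^ 2 * Real.logb 2 (ψ t ^ 2))) :
    timeEntropy ψ = Real.logb 2 L ↔ (∀ᵐ t : ℝ, t ∈ S → ψ t ^ 2 = 1 / L) :=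
  timeEntropy_eq_logb_measure_support_iff_general ψ hnorm S hS L hL hSL hsupp hent
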